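/- Let g_1 and g_2 be independent real random variables each having the standard Gumbel distribution, with cumulative distribution function F(x) = exp(−exp(−x)), let θ ∈ (0,1), and for τ > 0 define the Gumbel-Softmax relaxation S̃_τ := exp((log θ + g_1)/τ) / ( exp((log θ + g_1)/τ) + exp((log(1−θ) + g_2)/τ) ). Then, almost surely, S̃_τ converges as τ → 0⁺ to the indicator 𝟙{ log θ + g_1 > log(1−θ) + g_2 }; consequently S̃_τ converges in distribution, as τ → 0⁺, to the Bernoulli distribution with parameter θ. -/

import Mathlib

open MeasureTheory ProbabilityTheory Filter

/-- A real random variable `g` has the standard Gumbel distribution if its cumulative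
distribution function is `x ↦ exp (−exp (−x))`. -/
def HasStdGumbelCDF {Ω : Type*} [MeasurableSpace Ω] (μ : Measure Ω) (g : Ω → ℝ) : Prop :=
  ∀ x : ℝ, μ {ω | g ω ≤ x} = ENNReal.ofReal (Real.exp (-Real.exp (-x)))

/-- The Gumbel-Softmax relaxation with parameter `θ`, Gumbel noise `g₁, g₂` and
temperature `τ`:
`S̃_τ = exp((log θ + g₁)/τ) / (exp((log θ + g₁)/τ) + exp((log (1−θ) + g₂)/τ))`. -/
noncomputable def gumbelSoftmax {Ω : Type*} (θ : ℝ) (g₁ g₂ : Ω → ℝ) (τ : ℝ) (ω : Ω) : ℝ :=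
  Real.exp ((Real.log θ + g₁ ω) / τ) /
    (Real.exp ((Real.log θ + g₁ ω) / τ) + Real.exp ((Real.log (1 - θ) + g₂ ω) / τ))

section GumbelHelpers
open Set Topology

private lemma gumbelAux_hasDerivAt (c x : ℝ) :
    HasDerivAt (fun x => Real.exp (-(c * Real.exp (-x))))
      (c * Real.exp (-x) * Real.exp (-(c * Real.exp (-x)))) x := by
  have h2 : HasDerivAt (fun x : ℝ => c * Real.exp (-x)) (c * (Real.exp (-x) * (-1))) x :=
    ((Real.hasDerivAt_exp (-x)).comp x (hasDerivAt_neg x)).const_mul c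
  have h1 : HasDerivAt (fun x : ℝ => -(c * Real.exp (-x))) (c * Real.exp (-x)) x := by
    simpa [Pi.neg_def] using h2.neg
  simpa [mul_comm, mul_assoc, mul_left_comm] using h1.exp

private lemma gumbelAux_tendsto_top (c : ℝ) :
    Tendsto (fun x : ℝ => Real.exp (-(c * Real.exp (-x)))) atTop (𝓝 1) := by
  have h : Tendsto (fun x : ℝ => -(c * Real.exp (-x))) atTop (𝓝 0) := by
    have := Real.tendsto_exp_atBot.comp tendsto_neg_atTop_atBot
    simpa using ((this.const_mul c).neg)
  simpa [Function.comp_def] using (Real.continuous_exp.tendsto 0).comp h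

private lemma gumbelAux_tendsto_bot {c : ℝ} (hc : 0 < c) :
    Tendsto (fun x : ℝ => Real.exp (-(c * Real.exp (-x)))) atBot (𝓝 0) := by
  apply Real.tendsto_exp_atBot.comp
  apply tendsto_neg_atBot_iff.mpr
  exact (Real.tendsto_exp_atTop.comp tendsto_neg_atBot_atTop).const_mul_atTop hc

private lemma gumbelAux_integrable {c : ℝ} (hc : 0 < c) :
    Integrable (fun x => c * Real.exp (-x) * Real.exp (-(c * Real.exp (-x)))) := by
  have hIoi : IntegrableOn (fun x => c * Real.exp (-x) * Real.exp (-(c * Real.exp (-x))))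
      (Set.Ioi 0) := by
    exact integrableOn_Ioi_deriv_of_nonneg' (fun x _ => gumbelAux_hasDerivAt c x)
      (fun x _ => by positivity) (gumbelAux_tendsto_top c)
  have hIoi' : IntegrableOn (fun x => c * Real.exp (-(-x)) * Real.exp (-(c * Real.exp (-(-x)))))
      (Set.Ioi 0) := by
    have hderiv : ∀ x ∈ Set.Ici (0:ℝ), HasDerivAt (fun x => -Real.exp (-(c * Real.exp x)))
        (c * Real.exp (-(-x)) * Real.exp (-(c * Real.exp (-(-x))))) x := by
      intro x _
      have := (gumbelAux_hasDerivAt c (-x)).comp x (hasDerivAt_neg x)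
      simpa [neg_neg, mul_comm, mul_assoc, mul_left_comm, Pi.neg_def, Function.comp_def] using this.neg
    apply integrableOn_Ioi_deriv_of_nonneg' (l := 0) hderiv (fun x _ => by positivity)
    have : Tendsto (fun x : ℝ => Real.exp (-(c * Real.exp x))) atTop (𝓝 0) := by
      apply Real.tendsto_exp_atBot.comp
      exact tendsto_neg_atBot_iff.mpr (Real.tendsto_exp_atTop.const_mul_atTop hc)
    simpa using this.neg
  have hIio : IntegrableOn (fun x => c * Real.exp (-x) * Real.exp (-(c * Real.exp (-x))))
      (Set.Iio 0) := by
    have := (MeasurePreserving.integrableOn_comp_preimage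
      (Measure.measurePreserving_neg (volume : Measure ℝ))
      (Homeomorph.neg ℝ).measurableEmbedding).2 hIoi'
    simpa [Function.comp_def, neg_neg] using this
  rw [← integrableOn_univ, ← Set.Iio_union_Ici (a := (0:ℝ))]
  exact hIio.union ((integrableOn_Ici_iff_integrableOn_Ioi).2 hIoi)

private lemma gumbelAux_integral {c : ℝ} (hc : 0 < c) :
    ∫ x, c * Real.exp (-x) * Real.exp (-(c * Real.exp (-x))) = 1 := by
  rw [integral_of_hasDerivAt_of_tendsto (fun x => gumbelAux_hasDerivAt c x)
    (gumbelAux_integrable hc) (gumbelAux_tendsto_bot hc) (gumbelAux_tendsto_top c)]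
  norm_num

private lemma gumbelAux_integral_Iic {c : ℝ} (hc : 0 < c) (a : ℝ) :
    ∫ x in Set.Iic a, c * Real.exp (-x) * Real.exp (-(c * Real.exp (-x)))
      = Real.exp (-(c * Real.exp (-a))) := by
  rw [integral_Iic_of_hasDerivAt_of_tendsto' (fun x _ => gumbelAux_hasDerivAt c x)
    (gumbelAux_integrable hc).integrableOn (gumbelAux_tendsto_bot hc)]
  simp

private noncomputable def gumbelMeasure : Measure ℝ :=
  volume.withDensity fun x => ENNReal.ofReal (Real.exp (-x) * Real.exp (-Real.exp (-x)))

private lemma gumbelDensity_eq (x : ℝ) :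
    Real.exp (-x) * Real.exp (-Real.exp (-x))
      = 1 * Real.exp (-x) * Real.exp (-(1 * Real.exp (-x))) := by ring_nf

private lemma gumbelDensity_measurable :
    Measurable fun x : ℝ => ENNReal.ofReal (Real.exp (-x) * Real.exp (-Real.exp (-x))) := by
  fun_prop

private lemma gumbelMeasure_Iic (a : ℝ) :
    gumbelMeasure (Set.Iic a) = ENNReal.ofReal (Real.exp (-Real.exp (-a))) := by
  rw [gumbelMeasure, withDensity_apply _ measurableSet_Iic,
    ← ofReal_integral_eq_lintegral_ofReal]
  · congr 1
    calc ∫ x in Set.Iic a, Real.exp (-x) * Real.exp (-Real.exp (-x))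
        = ∫ x in Set.Iic a, 1 * Real.exp (-x) * Real.exp (-(1 * Real.exp (-x))) := by
          simp_rw [gumbelDensity_eq]
      _ = Real.exp (-(1 * Real.exp (-a))) := gumbelAux_integral_Iic one_pos a
      _ = Real.exp (-Real.exp (-a)) := by rw [one_mul]
  · have := (gumbelAux_integrable one_pos).integrableOn (s := Set.Iic a)
    apply this.congr_fun ?_ measurableSet_Iic
    intro x _; exact (gumbelDensity_eq x).symm
  · exact ae_of_all _ fun x => by positivity

private instance : IsProbabilityMeasure gumbelMeasure := by
  constructor
  rw [gumbelMeasure, withDensity_apply _ MeasurableSet.univ, Measure.restrict_univ,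
    ← ofReal_integral_eq_lintegral_ofReal]
  · rw [show (∫ x, Real.exp (-x) * Real.exp (-Real.exp (-x)))
        = ∫ x, 1 * Real.exp (-x) * Real.exp (-(1 * Real.exp (-x))) by simp_rw [gumbelDensity_eq],
      gumbelAux_integral one_pos, ENNReal.ofReal_one]
  · exact (gumbelAux_integrable one_pos).congr (ae_of_all _ fun x => (gumbelDensity_eq x).symm)
  · exact ae_of_all _ fun x => by positivity

private instance : NullSingletonClass gumbelMeasure := by
  constructor
  intro x
  rw [gumbelMeasure, withDensity_apply _ (measurableSet_singleton x)]
  simp [Measure.restrict_singleton]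

private lemma gumbelAux_prod_eq {k : ℝ} (hk : 0 < k) (x : ℝ) :
    (Real.exp (-x) * Real.exp (-Real.exp (-x))) * Real.exp (-(k * Real.exp (-x)))
      = (1 / (1 + k)) * ((1 + k) * Real.exp (-x) * Real.exp (-((1 + k) * Real.exp (-x)))) := by
  have h1k : (0:ℝ) < 1 + k := by linarith
  have h : Real.exp (-Real.exp (-x)) * Real.exp (-(k * Real.exp (-x)))
      = Real.exp (-((1 + k) * Real.exp (-x))) := by
    rw [← Real.exp_add]; ring_nf
  rw [mul_assoc, h]
  field_simp

private lemma gumbelAux_integral_k {k : ℝ} (hk : 0 < k) :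
    ∫ x, (Real.exp (-x) * Real.exp (-Real.exp (-x))) * Real.exp (-(k * Real.exp (-x)))
      = 1 / (1 + k) := by
  have h1k : (0:ℝ) < 1 + k := by linarith
  simp_rw [gumbelAux_prod_eq hk]
  rw [integral_const_mul, gumbelAux_integral h1k, mul_one]

private lemma gumbelAux_integrable_k {k : ℝ} (hk : 0 < k) :
    Integrable (fun x => (Real.exp (-x) * Real.exp (-Real.exp (-x)))
      * Real.exp (-(k * Real.exp (-x)))) := by
  have h1k : (0:ℝ) < 1 + k := by linarith
  have := (gumbelAux_integrable h1k).const_mul (1 / (1 + k))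
  exact this.congr (ae_of_all _ fun x => (gumbelAux_prod_eq hk x).symm)

private lemma gumbel_lintegral_k {k : ℝ} (hk : 0 < k) :
    ∫⁻ x, ENNReal.ofReal (Real.exp (-(k * Real.exp (-x)))) ∂gumbelMeasure
      = ENNReal.ofReal (1 / (1 + k)) := by
  rw [gumbelMeasure, lintegral_withDensity_eq_lintegral_mul _ gumbelDensity_measurable
    (by fun_prop)]
  calc ∫⁻ x, ((fun x => ENNReal.ofReal (Real.exp (-x) * Real.exp (-Real.exp (-x))))
        * fun x => ENNReal.ofReal (Real.exp (-(k * Real.exp (-x))))) x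
      = ∫⁻ x, ENNReal.ofReal ((Real.exp (-x) * Real.exp (-Real.exp (-x)))
          * Real.exp (-(k * Real.exp (-x)))) := by
        simp only [Pi.mul_apply]
        simp_rw [← ENNReal.ofReal_mul (by positivity : (0:ℝ) ≤ Real.exp (-_) * Real.exp (-Real.exp (-_)))]
    _ = ENNReal.ofReal (1 / (1 + k)) := by
        rw [← ofReal_integral_eq_lintegral_ofReal (gumbelAux_integrable_k hk)
          (ae_of_all _ fun x => by positivity), gumbelAux_integral_k hk]

private lemma map_eq_gumbelMeasure {Ω : Type*} [MeasurableSpace Ω] {μ : Measure Ω}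
    [IsProbabilityMeasure μ] {g : Ω → ℝ} (hg : Measurable g) (hG : HasStdGumbelCDF μ g) :
    Measure.map g μ = gumbelMeasure := by
  have : IsProbabilityMeasure (Measure.map g μ) := Measure.isProbabilityMeasure_map hg.aemeasurable
  refine Measure.ext_of_Iic _ _ fun a => ?_
  rw [Measure.map_apply hg measurableSet_Iic, gumbelMeasure_Iic]
  exact hG a

private lemma prod_gumbel_gt {θ : ℝ} (hθ : θ ∈ Set.Ioo (0:ℝ) 1) :
    (gumbelMeasure.prod gumbelMeasure) {p : ℝ × ℝ | Real.log (1-θ) + p.2 < Real.log θ + p.1}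
      = ENNReal.ofReal θ := by
  have hθ0 := hθ.1
  have h1θ : 0 < 1 - θ := by linarith [hθ.2]
  set k := (1 - θ)/θ with hk
  have hkpos : 0 < k := div_pos h1θ hθ0
  have hmeas : MeasurableSet {p : ℝ × ℝ | Real.log (1-θ) + p.2 < Real.log θ + p.1} :=
    measurableSet_lt (by fun_prop) (by fun_prop)
  rw [Measure.prod_apply hmeas]
  calc ∫⁻ x, gumbelMeasure (Prod.mk x ⁻¹'
          {p : ℝ × ℝ | Real.log (1-θ) + p.2 < Real.log θ + p.1}) ∂gumbelMeasure
      = ∫⁻ x, ENNReal.ofReal (Real.exp (-(k * Real.exp (-x)))) ∂gumbelMeasure := by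
        refine lintegral_congr fun x => ?_
        have hpre : Prod.mk x ⁻¹' {p : ℝ × ℝ | Real.log (1-θ) + p.2 < Real.log θ + p.1}
            = Set.Iio (Real.log θ + x - Real.log (1-θ)) := by
          ext y
          simp only [Set.mem_preimage, Set.mem_setOf_eq, Set.mem_Iio]
          constructor <;> intro <;> linarith
        rw [hpre, measure_congr Iio_ae_eq_Iic, gumbelMeasure_Iic]
        congr 2
        have hlog : -(Real.log θ + x - Real.log (1-θ)) = Real.log ((1-θ)/θ) + (-x) := by
          rw [Real.log_div (ne_of_gt h1θ) (ne_of_gt hθ0)]; ring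
        rw [hlog, Real.exp_add, Real.exp_log (div_pos h1θ hθ0)]
    _ = ENNReal.ofReal (1/(1+k)) := gumbel_lintegral_k hkpos
    _ = ENNReal.ofReal θ := by
        congr 1
        rw [hk]
        field_simp
        ring

private lemma prod_gumbel_diag (c₁ c₂ : ℝ) :
    (gumbelMeasure.prod gumbelMeasure) {p : ℝ × ℝ | c₁ + p.1 = c₂ + p.2} = 0 := by
  have hmeas : MeasurableSet {p : ℝ × ℝ | c₁ + p.1 = c₂ + p.2} :=
    measurableSet_eq_fun (by fun_prop) (by fun_prop)
  rw [Measure.prod_apply hmeas]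
  have hpre : ∀ x : ℝ, Prod.mk x ⁻¹' {p : ℝ × ℝ | c₁ + p.1 = c₂ + p.2} = {c₁ + x - c₂} := by
    intro x
    ext y
    simp only [Set.mem_preimage, Set.mem_setOf_eq, Set.mem_singleton_iff]
    constructor <;> intro <;> linarith
  simp [hpre, measure_singleton]

private lemma gumbelSoftmax_eq {Ω : Type*} (θ : ℝ) (g₁ g₂ : Ω → ℝ) (τ : ℝ) (ω : Ω) :
    gumbelSoftmax θ g₁ g₂ τ ω
      = (1 + Real.exp (((Real.log (1-θ) + g₂ ω) - (Real.log θ + g₁ ω)) / τ))⁻¹ := by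
  set a := Real.log θ + g₁ ω
  set b := Real.log (1-θ) + g₂ ω
  rw [gumbelSoftmax, show b / τ = a / τ + (b - a) / τ by rw [← add_div]; ring_nf,
    Real.exp_add, show Real.exp (a/τ) + Real.exp (a/τ) * Real.exp ((b-a)/τ)
      = Real.exp (a/τ) * (1 + Real.exp ((b-a)/τ)) by ring,
    div_mul_eq_div_div, div_self (Real.exp_ne_zero _), one_div]

private lemma tendsto_aux_neg {d : ℝ} (hd : d < 0) :
    Tendsto (fun τ : ℝ => (1 + Real.exp (d / τ))⁻¹) (𝓝[>] 0) (𝓝 1) := by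
  have h1 : Tendsto (fun τ : ℝ => d / τ) (𝓝[>] 0) atBot := by
    simp_rw [div_eq_mul_inv]
    exact tendsto_inv_nhdsGT_zero.const_mul_atTop_of_neg hd
  have h2 : Tendsto (fun τ : ℝ => Real.exp (d / τ)) (𝓝[>] 0) (𝓝 0) :=
    Real.tendsto_exp_atBot.comp h1
  have h3 : Tendsto (fun x : ℝ => (1 + x)⁻¹) (𝓝 0) (𝓝 1) := by
    have : ContinuousAt (fun x : ℝ => (1 + x)⁻¹) 0 := by
      apply ContinuousAt.inv₀ (by fun_prop)
      norm_num
    simpa using this.tendsto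
  simpa [Function.comp_def] using h3.comp h2

private lemma tendsto_aux_pos {d : ℝ} (hd : 0 < d) :
    Tendsto (fun τ : ℝ => (1 + Real.exp (d / τ))⁻¹) (𝓝[>] 0) (𝓝 0) := by
  have h1 : Tendsto (fun τ : ℝ => d / τ) (𝓝[>] 0) atTop := by
    simp_rw [div_eq_mul_inv]
    exact tendsto_inv_nhdsGT_zero.const_mul_atTop hd
  have h2 : Tendsto (fun τ : ℝ => 1 + Real.exp (d / τ)) (𝓝[>] 0) atTop :=
    (tendsto_atTop_add_const_left _ 1 Real.tendsto_exp_atTop).comp h1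
  exact tendsto_inv_atTop_zero.comp h2

end GumbelHelpers

/-- For independent standard Gumbel variables `g₁, g₂` and `θ ∈ (0,1)`,
the Gumbel-Softmax relaxation `S̃_τ` converges, almost surely as `τ → 0⁺`, to the
indicator of the event `{log θ + g₁ > log (1 − θ) + g₂}`; consequently it converges in
distribution to the Bernoulli distribution with parameter `θ` (i.e., for every bounded
continuous function `f`, `E[f(S̃_τ)] → θ · f 1 + (1 − θ) · f 0` as `τ → 0⁺`). -/
theorem gumbelSoftmax_tendsto_bernoulli {Ω : Type*} [MeasurableSpace Ω]
    (μ : Measure Ω) [IsProbabilityMeasure μ]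
    (g₁ g₂ : Ω → ℝ) (hg₁ : Measurable g₁) (hg₂ : Measurable g₂)
    (hindep : IndepFun g₁ g₂ μ)
    (hG₁ : HasStdGumbelCDF μ g₁) (hG₂ : HasStdGumbelCDF μ g₂)
    (θ : ℝ) (hθ : θ ∈ Set.Ioo (0 : ℝ) 1) :
    (∀ᵐ ω ∂μ, Tendsto (fun τ : ℝ => gumbelSoftmax θ g₁ g₂ τ ω) (nhdsWithin 0 (Set.Ioi 0))
      (nhds (if Real.log θ + g₁ ω > Real.log (1 - θ) + g₂ ω then (1 : ℝ) else 0))) ∧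
    ∀ f : BoundedContinuousFunction ℝ ℝ,
      Tendsto (fun τ : ℝ => ∫ ω, f (gumbelSoftmax θ g₁ g₂ τ ω) ∂μ)
        (nhdsWithin 0 (Set.Ioi 0)) (nhds (θ * f 1 + (1 - θ) * f 0)) := by
  obtain ⟨hθ0, hθ1⟩ := hθ
  have h1θ : (0:ℝ) < 1 - θ := by linarith
  have hpair : Measurable fun ω => (g₁ ω, g₂ ω) := hg₁.prodMk hg₂
  have hmap : Measure.map (fun ω => (g₁ ω, g₂ ω)) μ = gumbelMeasure.prod gumbelMeasure := by
    rw [(indepFun_iff_map_prod_eq_prod_map_map hg₁.aemeasurable hg₂.aemeasurable).mp hindep,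
      map_eq_gumbelMeasure hg₁ hG₁, map_eq_gumbelMeasure hg₂ hG₂]
  have hdiag : μ {ω | Real.log θ + g₁ ω = Real.log (1-θ) + g₂ ω} = 0 := by
    have hmeas : MeasurableSet {p : ℝ × ℝ | Real.log θ + p.1 = Real.log (1-θ) + p.2} :=
      measurableSet_eq_fun (by fun_prop) (by fun_prop)
    rw [show {ω | Real.log θ + g₁ ω = Real.log (1-θ) + g₂ ω}
        = (fun ω => (g₁ ω, g₂ ω)) ⁻¹' {p : ℝ × ℝ | Real.log θ + p.1 = Real.log (1-θ) + p.2}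
        from rfl,
      ← Measure.map_apply hpair hmeas, hmap, prod_gumbel_diag]
  have hmeasA : MeasurableSet {p : ℝ × ℝ | Real.log (1-θ) + p.2 < Real.log θ + p.1} :=
    measurableSet_lt (by fun_prop) (by fun_prop)
  have hA : μ {ω | Real.log (1-θ) + g₂ ω < Real.log θ + g₁ ω} = ENNReal.ofReal θ := by
    rw [show {ω | Real.log (1-θ) + g₂ ω < Real.log θ + g₁ ω}
        = (fun ω => (g₁ ω, g₂ ω)) ⁻¹' {p : ℝ × ℝ | Real.log (1-θ) + p.2 < Real.log θ + p.1}
        from rfl,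
      ← Measure.map_apply hpair hmeasA, hmap, prod_gumbel_gt ⟨hθ0, hθ1⟩]
  have hae : ∀ᵐ ω ∂μ, Real.log θ + g₁ ω ≠ Real.log (1-θ) + g₂ ω := by
    rw [ae_iff]
    simpa using hdiag
  have h1 : ∀ᵐ ω ∂μ, Tendsto (fun τ : ℝ => gumbelSoftmax θ g₁ g₂ τ ω) (nhdsWithin 0 (Set.Ioi 0))
      (nhds (if Real.log θ + g₁ ω > Real.log (1 - θ) + g₂ ω then (1 : ℝ) else 0)) := by
    filter_upwards [hae] with ω hne
    have heq : (fun τ : ℝ => gumbelSoftmax θ g₁ g₂ τ ω)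
        = fun τ : ℝ => (1 + Real.exp (((Real.log (1-θ) + g₂ ω) - (Real.log θ + g₁ ω)) / τ))⁻¹ :=
      funext fun τ => gumbelSoftmax_eq θ g₁ g₂ τ ω
    rw [heq]
    rcases lt_or_gt_of_ne hne with h | h
    · rw [if_neg (by exact fun hc => absurd hc (not_lt.2 (le_of_lt h)))]
      exact tendsto_aux_pos (by linarith)
    · rw [if_pos h]
      exact tendsto_aux_neg (by linarith)
  refine ⟨h1, fun f => ?_⟩
  have hAmeas : MeasurableSet {ω | Real.log (1-θ) + g₂ ω < Real.log θ + g₁ ω} :=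
    measurableSet_lt (by fun_prop) (by fun_prop)
  have hSmeas : ∀ τ : ℝ, Measurable (gumbelSoftmax θ g₁ g₂ τ) := by
    intro τ
    unfold gumbelSoftmax
    fun_prop
  have key : Tendsto (fun τ : ℝ => ∫ ω, f (gumbelSoftmax θ g₁ g₂ τ ω) ∂μ)
      (nhdsWithin 0 (Set.Ioi 0))
      (nhds (∫ ω, (if Real.log θ + g₁ ω > Real.log (1-θ) + g₂ ω then f 1 else f 0) ∂μ)) := by
    apply tendsto_integral_filter_of_dominated_convergence (fun _ => ‖f‖)
    · exact Eventually.of_forall fun τ =>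
        (f.continuous.measurable.comp (hSmeas τ)).aestronglyMeasurable
    · exact Eventually.of_forall fun τ => ae_of_all _ fun ω => f.norm_coe_le_norm _
    · exact integrable_const _
    · filter_upwards [h1] with ω hω
      have := (f.continuous.tendsto _).comp hω
      simpa [apply_ite (⇑f), Function.comp_def] using this
  have hint : ∫ ω, (if Real.log θ + g₁ ω > Real.log (1-θ) + g₂ ω then f 1 else f 0) ∂μ
      = θ * f 1 + (1 - θ) * f 0 := by
    set A := {ω | Real.log (1-θ) + g₂ ω < Real.log θ + g₁ ω} with hAdef
    have hfun : (fun ω => if Real.log θ + g₁ ω > Real.log (1-θ) + g₂ ω then f 1 else (f 0 : ℝ))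
        = fun ω => A.indicator (fun _ => (f 1 : ℝ)) ω + Aᶜ.indicator (fun _ => (f 0 : ℝ)) ω := by
      funext ω
      by_cases h : ω ∈ A
      · simp [Set.indicator, h, hAdef]
        have h' : Real.log (1-θ) + g₂ ω < Real.log θ + g₁ ω := h
        simp [h', not_le.mpr h']
      · simp [Set.indicator, h, hAdef]
        have h' : ¬ (Real.log (1-θ) + g₂ ω < Real.log θ + g₁ ω) := h
        simp [h', not_lt.mp h']
    rw [hfun, integral_add ((integrable_const _).indicator hAmeas)
      ((integrable_const _).indicator hAmeas.compl),
      integral_indicator_const _ hAmeas, integral_indicator_const _ hAmeas.compl, measureReal_def, measureReal_def,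
      prob_compl_eq_one_sub hAmeas, hA]
    have h2 : ((1:ENNReal) - ENNReal.ofReal θ).toReal = 1 - θ := by
      rw [← ENNReal.ofReal_one, ← ENNReal.ofReal_sub _ hθ0.le,
        ENNReal.toReal_ofReal (by linarith)]
    rw [h2, ENNReal.toReal_ofReal hθ0.le]
    simp [mul_comm]
  rw [← hint]
  exact key
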